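/- arXiv:2203.15632 — 4 statements merged into one kernel-verified Lean document; each statement's English description precedes it below -/
import Mathlib

section
/- Let μ₀ be any product probability measure on {0,1}^n (the coordinates are independent under μ₀), and let μ be obtained from μ₀ by applying any finite sequence of updates, each of which is either a gate update G_{α,β} (with α ≠ β) or a noise update N_i with some parameter p ∈ [0,1]. Then for every pair of disjoint subsets A, B of sites, μ(Q_{A∪B} = 0) ≥ μ(Q_A = 0) · μ(Q_B = 0). -/
open Finset

variable {n : ℕ}

/-- Transition kernel of the gate update `G_{α,β}`: the pair `(x α, x β)` goes
`(0,0) → (0,0)` and `(1,1) → (1,1)` with probability `1`, while `(0,1)` or `(1,0)`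
go to `(0,0)` with probability `1/5` and to `(1,1)` with probability `4/5`;
all other coordinates are unchanged. -/
noncomputable def gateKernel (α β : Fin n) (x y : Fin n → Bool) : ℝ :=
  if ∀ i, i ≠ α → i ≠ β → y i = x i then
    (if x α = x β then (if y α = x α ∧ y β = x β then 1 else 0)
     else if y α = false ∧ y β = false then 1 / 5
     else if y α = true ∧ y β = true then 4 / 5
     else 0)
  else 0

/-- One gate update `G_{α,β}` applied to a distribution `μ` on `{0,1}^n`. -/
noncomputable def gateUpdate (α β : Fin n) (μ : (Fin n → Bool) → ℝ) : (Fin n → Bool) → ℝ :=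
  fun y => ∑ x : Fin n → Bool, μ x * gateKernel α β x y

/-- Transition kernel of the noise update `N_i` with parameter `p`: coordinate
`x i` goes `0 → 0` with probability `(1-p)²`, `0 → 1` with probability `2p - p²`,
`1 → 1` with probability `1`; all other coordinates are unchanged. -/
noncomputable def noiseKernel (i : Fin n) (p : ℝ) (x y : Fin n → Bool) : ℝ :=
  if ∀ k, k ≠ i → y k = x k then
    (if x i = true then (if y i = true then 1 else 0)
     else if y i = false then (1 - p) ^ 2 else 2 * p - p ^ 2)
  else 0

/-- One noise update `N_i` with parameter `p` applied to a distribution `μ`. -/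
noncomputable def noiseUpdate (i : Fin n) (p : ℝ) (μ : (Fin n → Bool) → ℝ) : (Fin n → Bool) → ℝ :=
  fun y => ∑ x : Fin n → Bool, μ x * noiseKernel i p x y

/-- `μ(Q_S = 0)`: the probability, under `μ`, that all qubits in `S` carry no error. -/
noncomputable def probZero (μ : (Fin n → Bool) → ℝ) (S : Finset (Fin n)) : ℝ :=
  ∑ x : Fin n → Bool, if ∀ i ∈ S, x i = false then μ x else 0


/-- A single step of the error-propagation Markov chain: either a two-qubit gate
update `G_{α,β}` or a single-qubit noise update `N_i` with parameter `p`. -/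
inductive ChainStep (n : ℕ) where
  | gate (α β : Fin n) : ChainStep n
  | noise (i : Fin n) (p : ℝ) : ChainStep n

/-- Apply a single step of the chain to a distribution on `{0,1}^n`. -/
noncomputable def applyStep (s : ChainStep n) (μ : (Fin n → Bool) → ℝ) :
    (Fin n → Bool) → ℝ :=
  match s with
  | .gate α β => gateUpdate α β μ
  | .noise i p => noiseUpdate i p μ

/-- A step is admissible if a gate acts on two *distinct* sites and a noise
update has parameter `p ∈ [0,1]`. -/
def ChainStep.Admissible : ChainStep n → Prop
  | .gate α β => α ≠ β
  | .noise _ p => 0 ≤ p ∧ p ≤ 1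

/-!
Call `μ` positively associated if monotone functions are positively correlated under `μ`.
The product initial law is positively associated by the FKG inequality, since it satisfies
`μ a * μ b = μ (a ⊓ b) * μ (a ⊔ b)`. Each gate or noise update moves `x` to one of two comparable
configurations `lo x ≤ hi x`, with weights independent of `x` and with `lo`, `hi` monotone: a gate
sets both qubits to `x α ⊓ x β` (weight `1/5`) or to `x α ⊔ x β` (weight `4/5`), a noise update
keeps `x` or sets qubit `i` to `1`. Such an update preserves positive association: averaging a
monotone function over the step gives a monotone function, and within one step the two-point
Chebyshev inequality applies. The events `Q_A = 0` and `Q_B = 0` are decreasing and their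
intersection is `Q_{A ∪ B} = 0`.
-/

open Function

section PosAssoc

variable {Ω : Type*} [Fintype Ω]

def PosAssoc [Preorder Ω] (μ : Ω → ℝ) : Prop :=
  ∀ f g : Ω → ℝ, Monotone f → Monotone g →
    (∑ x, μ x * f x) * (∑ x, μ x * g x) ≤ ∑ x, μ x * (f x * g x)

lemma PosAssoc.sum_mul_sum_le_of_antitone [Preorder Ω] {μ : Ω → ℝ} (hμ : PosAssoc μ)
    {f g : Ω → ℝ} (hf : Antitone f) (hg : Antitone g) :
    (∑ x, μ x * f x) * (∑ x, μ x * g x) ≤ ∑ x, μ x * (f x * g x) := by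
  simpa [sum_neg_distrib] using hμ (-f) (-g) hf.neg hg.neg

lemma posAssoc_of_forall_nonneg_monotone [Preorder Ω] {μ : Ω → ℝ} (hμ : ∑ x, μ x = 1)
    (h : ∀ f g : Ω → ℝ, 0 ≤ f → 0 ≤ g → Monotone f → Monotone g →
      (∑ x, μ x * f x) * (∑ x, μ x * g x) ≤ ∑ x, μ x * (f x * g x)) :
    PosAssoc μ := by
  intro f g hf hg
  have bdd_below : ∀ u : Ω → ℝ, ∃ c, ∀ x, 0 ≤ u x + c := fun u =>
    ⟨∑ y, |u y|, fun x => by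
      have := single_le_sum (fun y _ => abs_nonneg (u y)) (mem_univ x)
      linarith [neg_abs_le (u x)]⟩
  obtain ⟨c, hc⟩ := bdd_below f
  obtain ⟨d, hd⟩ := bdd_below g
  have key := h (fun x => f x + c) (fun x => g x + d) hc hd (hf.add_const c) (hg.add_const d)
  have sum_add_const : ∀ (u : Ω → ℝ) (k : ℝ), ∑ x, μ x * (u x + k) = ∑ x, μ x * u x + k := by
    intro u k
    simp only [mul_add, sum_add_distrib, ← sum_mul, hμ, one_mul]
  have expand : ∀ x, μ x * ((f x + c) * (g x + d)) =
      μ x * (f x * g x) + d * (μ x * f x) + c * (μ x * g x) + c * d * μ x := fun x => by ring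
  rw [sum_add_const, sum_add_const, sum_congr rfl fun x _ => expand x] at key
  simp only [sum_add_distrib, ← mul_sum, hμ] at key
  linear_combination key

lemma posAssoc_of_mul_le_inf_mul_sup [DistribLattice Ω] {μ : Ω → ℝ} (hμ₀ : 0 ≤ μ)
    (hμ₁ : ∑ x, μ x = 1) (hμ : ∀ a b, μ a * μ b ≤ μ (a ⊓ b) * μ (a ⊔ b)) : PosAssoc μ :=
  posAssoc_of_forall_nonneg_monotone hμ₁ fun f g hf₀ hg₀ hf hg => by
    simpa [hμ₁] using fkg f g μ hμ₀ hf₀ hg₀ hf hg hμ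

end PosAssoc

section Bernoulli

variable {ι : Type*} [Fintype ι]

def bernoulliProd (q : ι → ℝ) (x : ι → Bool) : ℝ :=
  ∏ i, if x i then q i else 1 - q i

lemma sum_bernoulliProd [DecidableEq ι] (q : ι → ℝ) : ∑ x, bernoulliProd q x = 1 := by
  simp only [bernoulliProd]
  rw [← Fintype.prod_sum fun i (b : Bool) => if b then q i else 1 - q i]
  simp

lemma bernoulliProd_nonneg {q : ι → ℝ} (hq : ∀ i, 0 ≤ q i ∧ q i ≤ 1) : 0 ≤ bernoulliProd q :=
  fun x => prod_nonneg fun i _ => by split_ifs <;> linarith [hq i]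

lemma bernoulliProd_mul (q : ι → ℝ) (a b : ι → Bool) :
    bernoulliProd q a * bernoulliProd q b =
      bernoulliProd q (a ⊓ b) * bernoulliProd q (a ⊔ b) := by
  simp only [bernoulliProd, ← prod_mul_distrib]
  refine prod_congr rfl fun i _ => ?_
  rw [Pi.inf_apply, Pi.sup_apply]
  cases a i <;> cases b i <;> simp [mul_comm]

lemma posAssoc_bernoulliProd [DecidableEq ι] {q : ι → ℝ} (hq : ∀ i, 0 ≤ q i ∧ q i ≤ 1) :
    PosAssoc (bernoulliProd q) :=
  posAssoc_of_mul_le_inf_mul_sup (bernoulliProd_nonneg hq) (sum_bernoulliProd q)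
    fun a b => (bernoulliProd_mul q a b).le

end Bernoulli

section TwoPoint

variable {Ω : Type*} [Fintype Ω] [DecidableEq Ω]

def twoPointUpdate (a b : ℝ) (lo hi : Ω → Ω) (μ : Ω → ℝ) (y : Ω) : ℝ :=
  ∑ x, μ x * ((if lo x = y then a else 0) + (if hi x = y then b else 0))

lemma sum_twoPointUpdate_mul (a b : ℝ) (lo hi : Ω → Ω) (μ f : Ω → ℝ) :
    ∑ y, twoPointUpdate a b lo hi μ y * f y = ∑ x, μ x * (a * f (lo x) + b * f (hi x)) := by
  simp only [twoPointUpdate, sum_mul]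
  rw [sum_comm]
  refine sum_congr rfl fun x _ => ?_
  simp [mul_add, add_mul, mul_assoc, sum_add_distrib, ite_mul]

lemma twoPointUpdate_nonneg {a b : ℝ} (ha : 0 ≤ a) (hb : 0 ≤ b) (lo hi : Ω → Ω) {μ : Ω → ℝ}
    (hμ : 0 ≤ μ) : 0 ≤ twoPointUpdate a b lo hi μ := fun y =>
  sum_nonneg fun x _ => mul_nonneg (hμ x) <|
    add_nonneg (by split_ifs <;> simp [ha]) (by split_ifs <;> simp [hb])

lemma mix_mul_mix_le {a b u v u' v' : ℝ} (ha : 0 ≤ a) (hb : 0 ≤ b) (hab : a + b = 1)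
    (huv : u ≤ v) (hu'v' : u' ≤ v') :
    (a * u + b * v) * (a * u' + b * v') ≤ a * (u * u') + b * (v * v') := by
  obtain rfl : b = 1 - a := by linarith
  have gap : a * (u * u') + (1 - a) * (v * v') - (a * u + (1 - a) * v) * (a * u' + (1 - a) * v') =
      a * (1 - a) * ((v - u) * (v' - u')) := by ring
  linarith [mul_nonneg (mul_nonneg ha hb) (mul_nonneg (sub_nonneg.2 huv) (sub_nonneg.2 hu'v'))]

lemma PosAssoc.twoPointUpdate [Preorder Ω] {a b : ℝ} (ha : 0 ≤ a) (hb : 0 ≤ b) (hab : a + b = 1)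
    {lo hi : Ω → Ω} (hlo : Monotone lo) (hhi : Monotone hi) (hle : lo ≤ hi)
    {μ : Ω → ℝ} (hμ₀ : 0 ≤ μ) (hμ : PosAssoc μ) : PosAssoc (twoPointUpdate a b lo hi μ) := by
  intro f g hf hg
  have hmix : ∀ h : Ω → ℝ, Monotone h → Monotone fun x => a * h (lo x) + b * h (hi x) :=
    fun h hh => ((hh.comp hlo).const_mul ha).add ((hh.comp hhi).const_mul hb)
  simp only [sum_twoPointUpdate_mul]
  calc _ ≤ ∑ x, μ x * ((a * f (lo x) + b * f (hi x)) * (a * g (lo x) + b * g (hi x))) :=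
        hμ _ _ (hmix f hf) (hmix g hg)
    _ ≤ _ := sum_le_sum fun x _ => mul_le_mul_of_nonneg_left
        (mix_mul_mix_le ha hb hab (hf (hle x)) (hg (hle x))) (hμ₀ x)

end TwoPoint

def setPair (α β : Fin n) (c : Bool) (x : Fin n → Bool) : Fin n → Bool :=
  update (update x α c) β c

lemma setPair_le_setPair (α β : Fin n) {c c' : Bool} (hc : c ≤ c') {x x' : Fin n → Bool}
    (hx : x ≤ x') : setPair α β c x ≤ setPair α β c' x' :=
  update_le_update_iff.2 ⟨hc, fun j _ => update_le_update_iff.2 ⟨hc, fun k _ => hx k⟩ j⟩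

def gateLow (α β : Fin n) (x : Fin n → Bool) : Fin n → Bool :=
  setPair α β (x α ⊓ x β) x

def gateHigh (α β : Fin n) (x : Fin n → Bool) : Fin n → Bool :=
  setPair α β (x α ⊔ x β) x

lemma monotone_gateLow (α β : Fin n) : Monotone (gateLow α β) := fun _ _ h =>
  setPair_le_setPair α β (inf_le_inf (h α) (h β)) h

lemma monotone_gateHigh (α β : Fin n) : Monotone (gateHigh α β) := fun _ _ h =>
  setPair_le_setPair α β (sup_le_sup (h α) (h β)) h

lemma gateLow_le_gateHigh (α β : Fin n) : gateLow α β ≤ gateHigh α β := fun _ =>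
  setPair_le_setPair α β inf_le_sup le_rfl

lemma gateKernel_eq {α β : Fin n} (hαβ : α ≠ β) (x y : Fin n → Bool) :
    gateKernel α β x y =
      (if gateLow α β x = y then 1 / 5 else 0) + (if gateHigh α β x = y then 4 / 5 else 0) := by
  unfold gateKernel gateLow gateHigh setPair
  by_cases hoff : ∀ i, i ≠ α → i ≠ β → y i = x i
  · have key : ∀ c : Bool, update (update x α c) β c = y ↔ y α = c ∧ y β = c := by
      intro c
      constructor
      · rintro rfl; simp [hαβ]
      · rintro ⟨hα, hβ⟩
        funext k
        by_cases hkβ : k = β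
        · subst hkβ; simp [hβ]
        by_cases hkα : k = α
        · subst hkα; simp [hkβ, hα]
        · simp [hkα, hkβ, hoff k hkα hkβ]
    simp only [if_pos hoff, key]
    cases x α <;> cases x β <;> cases y α <;> cases y β <;> norm_num
  · have hne : ∀ c : Bool, update (update x α c) β c ≠ y := by
      rintro c rfl
      exact hoff fun k hkα hkβ => by simp [hkα, hkβ]
    simp [hoff, hne]

lemma gateUpdate_eq_twoPointUpdate {α β : Fin n} (hαβ : α ≠ β) (μ : (Fin n → Bool) → ℝ) :
    gateUpdate α β μ = twoPointUpdate (1 / 5) (4 / 5) (gateLow α β) (gateHigh α β) μ := by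
  funext y
  simp only [gateUpdate, twoPointUpdate, gateKernel_eq hαβ]

lemma noiseKernel_eq (i : Fin n) (p : ℝ) (x y : Fin n → Bool) :
    noiseKernel i p x y =
      (if x = y then (1 - p) ^ 2 else 0) + (if update x i true = y then 2 * p - p ^ 2 else 0) := by
  unfold noiseKernel
  by_cases hoff : ∀ k, k ≠ i → y k = x k
  · have key : ∀ c : Bool, update x i c = y ↔ y i = c := by
      intro c
      constructor
      · rintro rfl; simp
      · intro hc
        funext k
        by_cases hk : k = i
        · subst hk; simp [hc]
        · simp [hk, hoff k hk]
    have hx : x = y ↔ y i = x i := by simpa using key (x i)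
    simp only [if_pos hoff, key, hx]
    cases x i <;> cases y i <;> norm_num; ring
  · have hne : ∀ c : Bool, update x i c ≠ y := by
      rintro c rfl
      exact hoff fun k hk => by simp [hk]
    have hx : x ≠ y := by simpa using hne (x i)
    simp [hoff, hne, hx]

lemma noiseUpdate_eq_twoPointUpdate (i : Fin n) (p : ℝ) (μ : (Fin n → Bool) → ℝ) :
    noiseUpdate i p μ =
      twoPointUpdate ((1 - p) ^ 2) (2 * p - p ^ 2) id (fun x => update x i true) μ := by
  funext y
  simp only [noiseUpdate, twoPointUpdate, noiseKernel_eq, id]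

lemma monotone_update_true (i : Fin n) : Monotone fun x : Fin n → Bool => update x i true :=
  fun _ _ h => update_le_update_iff.2 ⟨le_rfl, fun j _ => h j⟩

lemma applyStep_nonneg_and_posAssoc {s : ChainStep n} (hs : s.Admissible) {μ : (Fin n → Bool) → ℝ}
    (hμ₀ : 0 ≤ μ) (hμ : PosAssoc μ) : 0 ≤ applyStep s μ ∧ PosAssoc (applyStep s μ) := by
  cases s with
  | gate α β =>
    rw [applyStep, gateUpdate_eq_twoPointUpdate hs]
    exact ⟨twoPointUpdate_nonneg (by norm_num) (by norm_num) _ _ hμ₀,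
      hμ.twoPointUpdate (by norm_num) (by norm_num) (by norm_num) (monotone_gateLow α β)
        (monotone_gateHigh α β) (gateLow_le_gateHigh α β) hμ₀⟩
  | noise i p =>
    obtain ⟨hp₀, hp₁⟩ := hs
    have ha : 0 ≤ (1 - p) ^ 2 := sq_nonneg _
    have hb : 0 ≤ 2 * p - p ^ 2 := by nlinarith
    rw [applyStep, noiseUpdate_eq_twoPointUpdate]
    exact ⟨twoPointUpdate_nonneg ha hb _ _ hμ₀,
      hμ.twoPointUpdate ha hb (by ring) monotone_id (monotone_update_true i)
        (fun x => le_update_self_iff.2 le_top) hμ₀⟩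

lemma posAssoc_foldl_applyStep (steps : List (ChainStep n)) (hsteps : ∀ s ∈ steps, s.Admissible)
    {μ : (Fin n → Bool) → ℝ} (hμ₀ : 0 ≤ μ) (hμ : PosAssoc μ) :
    PosAssoc (steps.foldl (fun m s => applyStep s m) μ) := by
  induction steps generalizing μ with
  | nil => exact hμ
  | cons s l ih =>
    obtain ⟨hμ₀', hμ'⟩ := applyStep_nonneg_and_posAssoc (hsteps s List.mem_cons_self) hμ₀ hμ
    exact ih (fun t ht => hsteps t (List.mem_cons_of_mem s ht)) hμ₀' hμ'

def zeroIndicator (S : Finset (Fin n)) (x : Fin n → Bool) : ℝ :=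
  if ∀ i ∈ S, x i = false then 1 else 0

lemma antitone_zeroIndicator (S : Finset (Fin n)) : Antitone (zeroIndicator S) := by
  intro x y hxy
  unfold zeroIndicator
  split_ifs with hy hx
  · exact le_rfl
  · exact absurd (fun i hi => le_bot_iff.1 ((hxy i).trans (hy i hi).le)) hx
  · exact zero_le_one
  · exact le_rfl

lemma zeroIndicator_union (A B : Finset (Fin n)) (x : Fin n → Bool) :
    zeroIndicator (A ∪ B) x = zeroIndicator A x * zeroIndicator B x := by
  simp only [zeroIndicator, mem_union, or_imp, forall_and, ite_and, ite_mul, one_mul, zero_mul]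

lemma probZero_eq_sum_mul_zeroIndicator (μ : (Fin n → Bool) → ℝ) (S : Finset (Fin n)) :
    probZero μ S = ∑ x, μ x * zeroIndicator S x := by
  simp [probZero, zeroIndicator]

theorem probZero_union_ge_mul_of_product_init_general
    (q : Fin n → ℝ) (hq : ∀ i, 0 ≤ q i ∧ q i ≤ 1)
    (steps : List (ChainStep n)) (hsteps : ∀ s ∈ steps, s.Admissible)
    (A B : Finset (Fin n)) :
    probZero
        (steps.foldl (fun m s => applyStep s m)
          (fun x => ∏ i : Fin n, if x i then q i else 1 - q i))
        (A ∪ B)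
      ≥ probZero
          (steps.foldl (fun m s => applyStep s m)
            (fun x => ∏ i : Fin n, if x i then q i else 1 - q i)) A
        * probZero
            (steps.foldl (fun m s => applyStep s m)
              (fun x => ∏ i : Fin n, if x i then q i else 1 - q i)) B := by
  have hμ := posAssoc_foldl_applyStep steps hsteps (bernoulliProd_nonneg hq)
    (posAssoc_bernoulliProd hq)
  simp only [ge_iff_le, probZero_eq_sum_mul_zeroIndicator, zeroIndicator_union]
  exact hμ.sum_mul_sum_le_of_antitone (antitone_zeroIndicator A) (antitone_zeroIndicator B)

/-- **Lemma 1 of the paper.** Starting from any product probability measure `μ₀`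
on `{0,1}^n` (each coordinate `i` is independently `1` with probability `q i`),
and applying any finite sequence of admissible gate/noise updates, the resulting
distribution `μ` satisfies `μ(Q_{A∪B} = 0) ≥ μ(Q_A = 0) · μ(Q_B = 0)` for all
disjoint subsets of sites `A, B`. -/
theorem probZero_union_ge_mul_of_product_init
    (q : Fin n → ℝ) (hq : ∀ i, 0 ≤ q i ∧ q i ≤ 1)
    (steps : List (ChainStep n)) (hsteps : ∀ s ∈ steps, s.Admissible)
    (A B : Finset (Fin n)) (hAB : Disjoint A B) :
    probZero
        (steps.foldl (fun m s => applyStep s m)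
          (fun x => ∏ i : Fin n, if x i then q i else 1 - q i))
        (A ∪ B)
      ≥ probZero
          (steps.foldl (fun m s => applyStep s m)
            (fun x => ∏ i : Fin n, if x i then q i else 1 - q i)) A
        * probZero
            (steps.foldl (fun m s => applyStep s m)
              (fun x => ∏ i : Fin n, if x i then q i else 1 - q i)) B :=
  probZero_union_ge_mul_of_product_init_general q hq steps hsteps A B
end

section
/- Let μ be any probability distribution on {0,1}^n, let i ≠ j be sites, let S be a subset of sites with i ∉ S and j ∉ S, and let ν be the distribution obtained from μ by one gate update G_{i,j}. Then ν(Q_{S∪{i,j}} = 0) = (3/5) μ(Q_{S∪{i,j}} = 0) + (1/5) [ μ(Q_{S∪{i}} = 0) + μ(Q_{S∪{j}} = 0) ]. -/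
open Finset

variable {n : ℕ}

/-- **Update rule (Eq. 27) of the paper.** For any probability distribution `μ`
on `{0,1}^n`, distinct sites `i ≠ j`, and a set of sites `S` containing neither
`i` nor `j`, one gate update `G_{i,j}` gives
`ν(Q_{S∪{i,j}} = 0) = (3/5) μ(Q_{S∪{i,j}} = 0)
                      + (1/5)[μ(Q_{S∪{i}} = 0) + μ(Q_{S∪{j}} = 0)]`. -/
theorem probZero_gateUpdate
    (μ : (Fin n → Bool) → ℝ) (hμ0 : ∀ x, 0 ≤ μ x) (hμ1 : ∑ x : Fin n → Bool, μ x = 1)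
    (i j : Fin n) (hij : i ≠ j)
    (S : Finset (Fin n)) (hiS : i ∉ S) (hjS : j ∉ S) :
    probZero (gateUpdate i j μ) (S ∪ {i, j})
      = (3 / 5) * probZero μ (S ∪ {i, j})
        + (1 / 5) * (probZero μ (S ∪ {i}) + probZero μ (S ∪ {j})) := by
  classical
  have key : ∀ x : Fin n → Bool,
      (∑ y : Fin n → Bool, if ∀ k ∈ S ∪ {i, j}, y k = false then gateKernel i j x y else 0)
      = (3/5) * (if ∀ k ∈ S ∪ ({i,j} : Finset (Fin n)), x k = false then 1 else 0)
        + (1/5) * ((if ∀ k ∈ S ∪ ({i} : Finset (Fin n)), x k = false then 1 else 0)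
                 + (if ∀ k ∈ S ∪ ({j} : Finset (Fin n)), x k = false then 1 else 0)) := by
    intro x
    set y₀ : Fin n → Bool := Function.update (Function.update x i false) j false with hy₀
    have hy₀i : y₀ i = false := by simp [hy₀, Function.update, hij]
    have hy₀j : y₀ j = false := by simp [hy₀]
    have hy₀k : ∀ k, k ≠ i → k ≠ j → y₀ k = x k := by
      intro k hki hkj; simp [hy₀, Function.update, hki, hkj]
    rw [Finset.sum_eq_single y₀]
    · by_cases hS : ∀ k ∈ S, x k = false
      · have hind : ∀ k ∈ S ∪ ({i, j} : Finset (Fin n)), y₀ k = false := by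
          intro k hk
          rcases Finset.mem_union.1 hk with hk | hk
          · rw [hy₀k k (fun h => hiS (h ▸ hk)) (fun h => hjS (h ▸ hk))]; exact hS k hk
          · rcases Finset.mem_insert.1 hk with rfl | hk
            · exact hy₀i
            · rw [Finset.mem_singleton.1 hk]; exact hy₀j
        rw [if_pos hind]
        unfold gateKernel
        rw [if_pos hy₀k]
        have e1 : (∀ k ∈ S ∪ ({i, j} : Finset (Fin n)), x k = false) ↔ (x i = false ∧ x j = false) := by
          constructor
          · intro h; exact ⟨h i (by simp), h j (by simp)⟩
          · intro h k hk
            rcases Finset.mem_union.1 hk with hk | hk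
            · exact hS k hk
            · rcases Finset.mem_insert.1 hk with rfl | hk
              · exact h.1
              · rw [Finset.mem_singleton.1 hk]; exact h.2
        have e2 : (∀ k ∈ S ∪ ({i} : Finset (Fin n)), x k = false) ↔ (x i = false) := by
          constructor
          · intro h; exact h i (by simp)
          · intro h k hk
            rcases Finset.mem_union.1 hk with hk | hk
            · exact hS k hk
            · rw [Finset.mem_singleton.1 hk]; exact h
        have e3 : (∀ k ∈ S ∪ ({j} : Finset (Fin n)), x k = false) ↔ (x j = false) := by
          constructor
          · intro h; exact h j (by simp)
          · intro h k hk
            rcases Finset.mem_union.1 hk with hk | hk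
            · exact hS k hk
            · rw [Finset.mem_singleton.1 hk]; exact h
        rw [if_congr e1 rfl rfl, if_congr e2 rfl rfl, if_congr e3 rfl rfl, hy₀i, hy₀j]
        rcases Bool.eq_false_or_eq_true (x i) with hi | hi <;>
          rcases Bool.eq_false_or_eq_true (x j) with hj | hj <;>
          rw [hi, hj] <;> norm_num
      · push_neg at hS
        obtain ⟨k, hkS, hk⟩ := hS
        have hxk : x k = true := by simpa using hk
        have hki : k ≠ i := fun h => hiS (h ▸ hkS)
        have hkj : k ≠ j := fun h => hjS (h ▸ hkS)
        have h1 : ¬ ∀ m ∈ S ∪ ({i, j} : Finset (Fin n)), y₀ m = false := by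
          intro h
          have := h k (Finset.mem_union_left _ hkS)
          rw [hy₀k k hki hkj, hxk] at this; exact Bool.noConfusion this
        have h2 : ¬ ∀ m ∈ S ∪ ({i, j} : Finset (Fin n)), x m = false := fun h =>
          by have := h k (Finset.mem_union_left _ hkS); rw [hxk] at this; exact Bool.noConfusion this
        have h3 : ¬ ∀ m ∈ S ∪ ({i} : Finset (Fin n)), x m = false := fun h =>
          by have := h k (Finset.mem_union_left _ hkS); rw [hxk] at this; exact Bool.noConfusion this
        have h4 : ¬ ∀ m ∈ S ∪ ({j} : Finset (Fin n)), x m = false := fun h =>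
          by have := h k (Finset.mem_union_left _ hkS); rw [hxk] at this; exact Bool.noConfusion this
        rw [if_neg h1, if_neg h2, if_neg h3, if_neg h4]; ring
    · intro y _ hne
      by_cases hc : ∀ k ∈ S ∪ ({i, j} : Finset (Fin n)), y k = false
      · rw [if_pos hc]
        unfold gateKernel
        by_cases hout : ∀ k, k ≠ i → k ≠ j → y k = x k
        · exfalso
          apply hne
          funext k
          by_cases hki : k = i
          · subst hki; rw [hy₀i]; exact hc k (by simp)
          by_cases hkj : k = j
          · subst hkj; rw [hy₀j]; exact hc k (by simp)
          · rw [hy₀k k hki hkj]; exact hout k hki hkj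
        · rw [if_neg hout]
      · rw [if_neg hc]
    · intro h; exact absurd (Finset.mem_univ _) h
  unfold probZero gateUpdate
  have lhs_eq : (∑ y : Fin n → Bool, if ∀ k ∈ S ∪ ({i,j} : Finset (Fin n)), y k = false
        then ∑ x : Fin n → Bool, μ x * gateKernel i j x y else 0)
      = ∑ x : Fin n → Bool, μ x *
          ∑ y : Fin n → Bool, (if ∀ k ∈ S ∪ ({i,j} : Finset (Fin n)), y k = false
            then gateKernel i j x y else 0) := by
    have step : ∀ y : Fin n → Bool,
        (if ∀ k ∈ S ∪ ({i,j} : Finset (Fin n)), y k = false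
          then ∑ x : Fin n → Bool, μ x * gateKernel i j x y else 0)
        = ∑ x : Fin n → Bool, (if ∀ k ∈ S ∪ ({i,j} : Finset (Fin n)), y k = false
            then μ x * gateKernel i j x y else 0) := by
      intro y; split
      · rfl
      · simp
    rw [Finset.sum_congr rfl (fun y _ => step y), Finset.sum_comm]
    refine Finset.sum_congr rfl fun x _ => ?_
    rw [Finset.mul_sum]
    refine Finset.sum_congr rfl fun y _ => ?_
    rw [mul_ite, mul_zero]
  rw [lhs_eq]
  rw [Finset.sum_congr rfl (fun x _ => by rw [key x])]
  rw [mul_add, Finset.mul_sum, Finset.mul_sum, Finset.mul_sum, ← Finset.sum_add_distrib,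
    ← Finset.sum_add_distrib]
  refine Finset.sum_congr rfl fun x _ => ?_
  split_ifs <;> ring
end

section
/- Let μ be any probability distribution on {0,1}^n, let A, B be disjoint subsets of sites, let i be a site, let p ∈ [0,1], and let ν be the distribution obtained from μ by one noise update N_i with parameter p. Then V_{A,B}(ν) = (1−p)^{2k} · V_{A,B}(μ), where k = 1 if i ∈ A ∪ B and k = 0 otherwise. In particular, if V_{A,B}(μ) ≥ 0 then V_{A,B}(ν) ≥ 0. -/
/-!
Pair the new distribution with the indicator of `{x_S = 0}` and move the noise step onto the
indicator. Started from `x`, the step at site `i` keeps the event `{x_S = 0}` with probability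
`1` if `i ∉ S`, and with probability `(1 - p)²` or `0` (according as `x` is in the event or not)
if `i ∈ S`, since an error at `i` is never removed. Hence every `μ(Q_S = 0)` is multiplied by
`(1 - p)^(2 [i ∈ S])`, and for disjoint `A, B` the factors of `A` and `B` multiply to the one of
`A ∪ B`.
-/

open Finset

variable {n : ℕ}

/-- `V_{A,B}(μ) = μ(Q_{A∪B} = 0) − μ(Q_A = 0)·μ(Q_B = 0)` for disjoint `A, B`. -/
noncomputable def Vcorr (μ : (Fin n → Bool) → ℝ) (A B : Finset (Fin n)) : ℝ :=
  probZero μ (A ∪ B) - probZero μ A * probZero μ B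

section NoiseUpdate

variable (i : Fin n) (p : ℝ)

theorem noiseKernel_eq_zero {x y : Fin n → Bool} (h₀ : y ≠ Function.update x i false)
    (h₁ : y ≠ Function.update x i true) : noiseKernel i p x y = 0 := by
  rw [noiseKernel, if_neg]
  intro hy
  cases hyi : y i
  · exact h₀ (funext fun k => by by_cases hk : k = i <;> simp_all)
  · exact h₁ (funext fun k => by by_cases hk : k = i <;> simp_all)

theorem noiseKernel_update (x : Fin n → Bool) (b : Bool) :
    noiseKernel i p x (Function.update x i b)
      = if x i = true then (if b = true then 1 else 0)
        else if b = false then (1 - p) ^ 2 else 2 * p - p ^ 2 := by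
  rw [noiseKernel, if_pos fun k hk => Function.update_of_ne hk _ _, Function.update_self]

theorem sum_noiseKernel_mul (x : Fin n → Bool) (f : (Fin n → Bool) → ℝ) :
    ∑ y, noiseKernel i p x y * f y
      = if x i = true then f x
        else (1 - p) ^ 2 * f x + (2 * p - p ^ 2) * f (Function.update x i true) := by
  have hne : Function.update x i false ≠ Function.update x i true := fun h => by
    simpa using congrFun h i
  rw [Fintype.sum_eq_add _ _ hne fun y hy => by rw [noiseKernel_eq_zero i p hy.1 hy.2, zero_mul],
    noiseKernel_update, noiseKernel_update]
  have hx : Function.update x i (x i) = x := Function.update_eq_self i x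
  cases hxi : x i <;> rw [hxi] at hx <;> simp [hx]

theorem sum_noiseUpdate_mul (μ f : (Fin n → Bool) → ℝ) :
    ∑ y, noiseUpdate i p μ y * f y = ∑ x, μ x * ∑ y, noiseKernel i p x y * f y := by
  simp only [noiseUpdate, sum_mul, mul_sum, mul_assoc]
  exact sum_comm

theorem probZero_eq_sum_mul (μ : (Fin n → Bool) → ℝ) (S : Finset (Fin n)) :
    probZero μ S = ∑ x, μ x * if ∀ j ∈ S, x j = false then 1 else 0 := by
  simp [probZero]

theorem sum_noiseKernel_mul_indicator (x : Fin n → Bool) (S : Finset (Fin n)) :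
    ∑ y, noiseKernel i p x y * (if ∀ j ∈ S, y j = false then 1 else 0)
      = (1 - p) ^ (2 * if i ∈ S then 1 else 0) * if ∀ j ∈ S, x j = false then 1 else 0 := by
  rw [sum_noiseKernel_mul]
  by_cases hi : i ∈ S
  · have hflip : ¬ ∀ j ∈ S, Function.update x i true j = false := fun h => by
      simpa using h i hi
    cases hxi : x i
    · simp [hi, hflip]
    · have hx : ¬ ∀ j ∈ S, x j = false := fun h => by simpa [hxi] using h i hi
      simp [hi, hx]
  · have hflip : (∀ j ∈ S, Function.update x i true j = false) ↔ ∀ j ∈ S, x j = false :=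
      forall₂_congr fun j hj => by rw [Function.update_of_ne (ne_of_mem_of_not_mem hj hi)]
    simp only [hi, hflip, if_false]
    split_ifs <;> ring

theorem probZero_noiseUpdate (μ : (Fin n → Bool) → ℝ) (S : Finset (Fin n)) :
    probZero (noiseUpdate i p μ) S = (1 - p) ^ (2 * if i ∈ S then 1 else 0) * probZero μ S := by
  simp only [probZero_eq_sum_mul, sum_noiseUpdate_mul, sum_noiseKernel_mul_indicator,
    mul_sum]
  exact sum_congr rfl fun x _ => mul_left_comm _ _ _

end NoiseUpdate

theorem Vcorr_noiseUpdate_general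
    (μ : (Fin n → Bool) → ℝ)
    (A B : Finset (Fin n)) (hAB : Disjoint A B)
    (i : Fin n) (p : ℝ) :
    Vcorr (noiseUpdate i p μ) A B
        = (1 - p) ^ (2 * (if i ∈ A ∪ B then 1 else 0)) * Vcorr μ A B
      ∧ (0 ≤ Vcorr μ A B → 0 ≤ Vcorr (noiseUpdate i p μ) A B) := by
  have hunion : (if i ∈ A ∪ B then 1 else 0)
      = (if i ∈ A then 1 else 0) + (if i ∈ B then 1 else 0) := by
    by_cases hA : i ∈ A
    · simp [hA, disjoint_left.mp hAB hA]
    · simp [hA]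
  have hV : Vcorr (noiseUpdate i p μ) A B
      = (1 - p) ^ (2 * (if i ∈ A ∪ B then 1 else 0)) * Vcorr μ A B := by
    simp only [Vcorr, probZero_noiseUpdate, hunion, mul_add, pow_add]
    ring
  refine ⟨hV, fun h => ?_⟩
  rw [hV]
  exact mul_nonneg ((even_two_mul _).pow_nonneg _) h

/-- **Noise step of the inductive proof of Lemma 1.** For any probability
distribution `μ` on `{0,1}^n`, disjoint site subsets `A, B`, a site `i`, and
`p ∈ [0,1]`, one noise update `N_i` with parameter `p` satisfies
`V_{A,B}(ν) = (1−p)^{2k} V_{A,B}(μ)` where `k = 1` if `i ∈ A ∪ B` and `k = 0`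
otherwise; in particular `V_{A,B}(μ) ≥ 0` implies `V_{A,B}(ν) ≥ 0`. -/
theorem Vcorr_noiseUpdate
    (μ : (Fin n → Bool) → ℝ) (hμ0 : ∀ x, 0 ≤ μ x) (hμ1 : ∑ x : Fin n → Bool, μ x = 1)
    (A B : Finset (Fin n)) (hAB : Disjoint A B)
    (i : Fin n) (p : ℝ) (hp0 : 0 ≤ p) (hp1 : p ≤ 1) :
    Vcorr (noiseUpdate i p μ) A B
        = (1 - p) ^ (2 * (if i ∈ A ∪ B then 1 else 0)) * Vcorr μ A B
      ∧ (0 ≤ Vcorr μ A B → 0 ≤ Vcorr (noiseUpdate i p μ) A B) :=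
  Vcorr_noiseUpdate_general μ A B hAB i p
end

section
/- Let μ be a probability distribution on {0,1}^n such that V_{A,B}(μ) ≥ 0 for all pairs of disjoint subsets A, B of sites. Let α ≠ β be sites and let ν be the distribution obtained from μ by one gate update G_{α,β}. Then V_{A,B}(ν) ≥ 0 for all pairs of disjoint subsets A, B of sites. -/
open Finset

variable {n : ℕ}

namespace GateAux

noncomputable def ind (S : Finset (Fin n)) (x : Fin n → Bool) : ℝ :=
  if ∀ i ∈ S, x i = false then 1 else 0

lemma ind_nonneg (S : Finset (Fin n)) (x : Fin n → Bool) : 0 ≤ ind S x := by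
  unfold ind; split_ifs <;> norm_num

lemma probZero_eq (μ : (Fin n → Bool) → ℝ) (S : Finset (Fin n)) :
    probZero μ S = ∑ x : Fin n → Bool, μ x * ind S x := by
  unfold probZero ind
  refine Finset.sum_congr rfl fun x _ => ?_
  split_ifs <;> simp

lemma probZero_nonneg (μ : (Fin n → Bool) → ℝ) (hμ0 : ∀ x, 0 ≤ μ x) (S : Finset (Fin n)) :
    0 ≤ probZero μ S := by
  rw [probZero_eq]
  exact Finset.sum_nonneg fun x _ => mul_nonneg (hμ0 x) (ind_nonneg S x)

lemma probZero_mono (μ : (Fin n → Bool) → ℝ) (hμ0 : ∀ x, 0 ≤ μ x)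
    {S T : Finset (Fin n)} (h : S ⊆ T) : probZero μ T ≤ probZero μ S := by
  unfold probZero
  apply Finset.sum_le_sum
  intro x _
  split_ifs with h1 h2
  · exact le_refl _
  · exact absurd (fun i hi => h1 i (h hi)) h2
  · exact hμ0 x
  · exact le_refl _

/-- the pair-update function -/
def upd (α β : Fin n) (x : Fin n → Bool) (b : Bool) : Fin n → Bool :=
  fun i => if i = α ∨ i = β then b else x i

lemma kernel_eq (α β : Fin n) (hαβ : α ≠ β) (x y : Fin n → Bool) :
    gateKernel α β x y =
      if x α = x β then (if y = x then (1:ℝ) else 0)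
      else (if y = upd α β x false then 1/5 else 0) + (if y = upd α β x true then 4/5 else 0) := by
  unfold gateKernel
  by_cases hco : ∀ i, i ≠ α → i ≠ β → y i = x i
  · rw [if_pos hco]
    by_cases h : x α = x β
    · rw [if_pos h, if_pos h]
      have : (y α = x α ∧ y β = x β) ↔ y = x := by
        constructor
        · rintro ⟨h1, h2⟩
          funext i
          by_cases hi : i = α
          · subst hi; exact h1
          · by_cases hj : i = β
            · subst hj; exact h2
            · exact hco i hi hj
        · rintro rfl; exact ⟨rfl, rfl⟩
      simp [this]
    · rw [if_neg h, if_neg h]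
      have key : ∀ b : Bool, (y α = b ∧ y β = b) ↔ y = upd α β x b := by
        intro b
        constructor
        · rintro ⟨h1, h2⟩
          funext i
          unfold upd
          by_cases hi : i = α
          · subst hi; simp [h1]
          · by_cases hj : i = β
            · subst hj; simp [h2]
            · simp [hi, hj, hco i hi hj]
        · rintro rfl
          unfold upd
          simp [hαβ]
      have k0 := key false
      have k1 := key true
      by_cases h0 : y = upd α β x false
      · have : y α = false ∧ y β = false := k0.mpr h0
        rw [if_pos this, if_pos h0]
        have h1 : ¬ y = upd α β x true := by
          intro h1
          rw [h0] at h1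
          have := congrFun h1 α
          simp [upd] at this
        rw [if_neg h1]; ring
      · have hne : ¬ (y α = false ∧ y β = false) := fun hc => h0 (k0.mp hc)
        rw [if_neg hne, if_neg h0]
        by_cases h1 : y = upd α β x true
        · rw [if_pos (k1.mpr h1), if_pos h1]; ring
        · have hne1 : ¬ (y α = true ∧ y β = true) := fun hc => h1 (k1.mp hc)
          rw [if_neg hne1, if_neg h1]; ring
  · rw [if_neg hco]
    have h0 : ∀ b : Bool, ¬ y = upd α β x b := by
      intro b hb
      apply hco
      intro i hi hj
      rw [hb]; unfold upd; simp [hi, hj]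
    have hx : ¬ y = x := by
      intro hb; apply hco; intro i _ _; rw [hb]
    by_cases h : x α = x β
    · rw [if_pos h, if_neg hx]
    · rw [if_neg h, if_neg (h0 false), if_neg (h0 true)]; ring


lemma sum_ind_kernel (α β : Fin n) (hαβ : α ≠ β) (S : Finset (Fin n)) (x : Fin n → Bool) :
    ∑ y : Fin n → Bool, ind S y * gateKernel α β x y =
      if x α = x β then ind S x
      else (1/5) * ind S (upd α β x false) + (4/5) * ind S (upd α β x true) := by
  by_cases h : x α = x β
  · rw [if_pos h]
    calc ∑ y : Fin n → Bool, ind S y * gateKernel α β x y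
        = ∑ y : Fin n → Bool, (if y = x then ind S y else 0) := by
          refine Finset.sum_congr rfl fun y _ => ?_
          rw [kernel_eq α β hαβ, if_pos h]
          split_ifs <;> ring
      _ = ind S x := by rw [Finset.sum_ite_eq' Finset.univ x (ind S)]; simp
  · rw [if_neg h]
    calc ∑ y : Fin n → Bool, ind S y * gateKernel α β x y
        = ∑ y : Fin n → Bool,
            ((if y = upd α β x false then (1/5) * ind S y else 0)
              + (if y = upd α β x true then (4/5) * ind S y else 0)) := by
          refine Finset.sum_congr rfl fun y _ => ?_
          rw [kernel_eq α β hαβ, if_neg h]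
          split_ifs <;> ring
      _ = (1/5) * ind S (upd α β x false) + (4/5) * ind S (upd α β x true) := by
          rw [Finset.sum_add_distrib,
            Finset.sum_ite_eq' Finset.univ (upd α β x false) (fun y => (1/5) * ind S y),
            Finset.sum_ite_eq' Finset.univ (upd α β x true) (fun y => (4/5) * ind S y)]
          simp

lemma probZero_gateUpdate (α β : Fin n) (μ : (Fin n → Bool) → ℝ) (S : Finset (Fin n)) :
    probZero (gateUpdate α β μ) S
      = ∑ x : Fin n → Bool, μ x * ∑ y : Fin n → Bool, ind S y * gateKernel α β x y := by
  rw [probZero_eq]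
  unfold gateUpdate
  simp only [Finset.sum_mul]
  rw [Finset.sum_comm]
  refine Finset.sum_congr rfl fun x _ => ?_
  rw [Finset.mul_sum]
  refine Finset.sum_congr rfl fun y _ => ?_
  ring

lemma ind_insert (j : Fin n) (T : Finset (Fin n)) (x : Fin n → Bool) :
    ind (insert j T) x = if x j = false then ind T x else 0 := by
  unfold ind
  simp only [Finset.forall_mem_insert]
  split_ifs <;> tauto

lemma ind_upd_false (α β : Fin n) (S : Finset (Fin n)) (x : Fin n → Bool) :
    ind S (upd α β x false) = ind (S \ {α, β}) x := by
  unfold ind upd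
  refine if_congr ?_ rfl rfl
  constructor
  · intro h i hi
    rw [Finset.mem_sdiff, Finset.mem_insert, Finset.mem_singleton] at hi
    have := h i hi.1
    simpa [hi.2] using this
  · intro h i hi
    by_cases hc : i = α ∨ i = β
    · simp [hc]
    · push_neg at hc
      simp only [hc.1, hc.2, or_self, if_false]
      exact h i (by rw [Finset.mem_sdiff, Finset.mem_insert, Finset.mem_singleton]; tauto)

lemma ind_upd_true_mem (α β : Fin n) (S : Finset (Fin n)) (hS : α ∈ S ∨ β ∈ S)
    (x : Fin n → Bool) : ind S (upd α β x true) = 0 := by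
  unfold ind upd
  rw [if_neg]
  intro h
  rcases hS with hα | hβ
  · have := h α hα; simp at this
  · have := h β hβ; simp at this

lemma ind_upd_notmem (α β : Fin n) (S : Finset (Fin n)) (hα : α ∉ S) (hβ : β ∉ S)
    (b : Bool) (x : Fin n → Bool) : ind S (upd α β x b) = ind S x := by
  unfold ind upd
  refine if_congr ?_ rfl rfl
  refine forall₂_congr fun i hi => ?_
  have h1 : i ≠ α := fun h => hα (h ▸ hi)
  have h2 : i ≠ β := fun h => hβ (h ▸ hi)
  simp [h1, h2]

lemma ind_sdiff_eq (α β : Fin n) (S : Finset (Fin n)) (x : Fin n → Bool)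
    (hα : x α = false) (hβ : x β = false) : ind S x = ind (S \ {α, β}) x := by
  unfold ind
  refine if_congr ?_ rfl rfl
  constructor
  · intro h i hi
    exact h i (Finset.mem_sdiff.mp hi).1
  · intro h i hi
    by_cases hc : i = α
    · rw [hc]; exact hα
    · by_cases hc2 : i = β
      · rw [hc2]; exact hβ
      · exact h i (by rw [Finset.mem_sdiff, Finset.mem_insert, Finset.mem_singleton]; tauto)

lemma ind_eq_zero_of_true (S : Finset (Fin n)) (x : Fin n → Bool)
    {j : Fin n} (hj : j ∈ S) (hx : x j = true) : ind S x = 0 := by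
  unfold ind
  rw [if_neg]
  intro h
  rw [h j hj] at hx
  exact Bool.false_ne_true hx

lemma probZero_gate_notmem (α β : Fin n) (hαβ : α ≠ β) (μ : (Fin n → Bool) → ℝ)
    (S : Finset (Fin n)) (hα : α ∉ S) (hβ : β ∉ S) :
    probZero (gateUpdate α β μ) S = probZero μ S := by
  rw [probZero_gateUpdate, probZero_eq]
  refine Finset.sum_congr rfl fun x _ => ?_
  rw [sum_ind_kernel α β hαβ]
  congr 1
  split_ifs with h
  · rfl
  · rw [ind_upd_notmem α β S hα hβ, ind_upd_notmem α β S hα hβ]; ring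

lemma probZero_gate_mem (α β : Fin n) (hαβ : α ≠ β) (μ : (Fin n → Bool) → ℝ)
    (S : Finset (Fin n)) (hS : α ∈ S ∨ β ∈ S) :
    probZero (gateUpdate α β μ) S
      = (1/5) * probZero μ (insert α (S \ {α, β}))
        + (1/5) * probZero μ (insert β (S \ {α, β}))
        + (3/5) * probZero μ (insert α (insert β (S \ {α, β}))) := by
  rw [probZero_gateUpdate]
  simp only [probZero_eq, Finset.mul_sum]
  rw [← Finset.sum_add_distrib, ← Finset.sum_add_distrib]
  refine Finset.sum_congr rfl fun x _ => ?_
  rw [← Finset.mul_sum, sum_ind_kernel α β hαβ]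
  rw [ind_insert, ind_insert, ind_insert, ind_insert]
  cases hxα : x α <;> cases hxβ : x β
  · rw [if_pos (by simp [hxα, hxβ])]
    rw [ind_sdiff_eq α β S x hxα hxβ]
    simp only [hxα, hxβ, if_pos rfl, if_true]
    ring
  · rw [if_neg (by simp [hxα, hxβ])]
    rw [ind_upd_false, ind_upd_true_mem α β S hS]
    simp only [hxα, hxβ, if_pos rfl, if_true, Bool.true_eq_false, if_false]
    ring
  · rw [if_neg (by simp [hxα, hxβ])]
    rw [ind_upd_false, ind_upd_true_mem α β S hS]
    simp only [hxα, hxβ, if_pos rfl, if_true, Bool.true_eq_false, if_false]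
    ring
  · rw [if_pos (by simp [hxα, hxβ])]
    have : ind S x = 0 := by
      rcases hS with h | h
      · exact ind_eq_zero_of_true S x h hxα
      · exact ind_eq_zero_of_true S x h hxβ
    rw [this]
    simp only [hxα, hxβ, Bool.true_eq_false, if_false]
    ring


lemma Vcorr_comm (μ : (Fin n → Bool) → ℝ) (A B : Finset (Fin n)) :
    Vcorr μ A B = Vcorr μ B A := by
  unfold Vcorr; rw [Finset.union_comm, mul_comm]

lemma case_one_sided (μ : (Fin n → Bool) → ℝ)
    (hV : ∀ A B : Finset (Fin n), Disjoint A B → 0 ≤ Vcorr μ A B)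
    (α β : Fin n) (hαβ : α ≠ β) (A B : Finset (Fin n)) (hAB : Disjoint A B)
    (hA : α ∈ A ∨ β ∈ A) (hαB : α ∉ B) (hβB : β ∉ B) :
    0 ≤ Vcorr (gateUpdate α β μ) A B := by
  have hU : α ∈ A ∪ B ∨ β ∈ A ∪ B := by
    rcases hA with h | h
    · exact Or.inl (Finset.mem_union_left _ h)
    · exact Or.inr (Finset.mem_union_left _ h)
  unfold Vcorr
  rw [probZero_gate_mem α β hαβ μ (A ∪ B) hU, probZero_gate_mem α β hαβ μ A hA,
      probZero_gate_notmem α β hαβ μ B hαB hβB]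
  have hsd : (A ∪ B) \ {α, β} = (A \ {α, β}) ∪ B := by
    rw [Finset.union_sdiff_distrib]
    congr 1
    rw [Finset.sdiff_eq_self_iff_disjoint, Finset.disjoint_right]
    intro i hi
    simp only [Finset.mem_insert, Finset.mem_singleton] at hi
    rcases hi with rfl | rfl
    · exact hαB
    · exact hβB
  rw [hsd]
  set A' := A \ {α, β} with hA'def
  have hαA' : α ∉ A' := by rw [hA'def]; simp
  have hβA' : β ∉ A' := by rw [hA'def]; simp
  have hd : Disjoint A' B := hAB.mono_left Finset.sdiff_subset
  have hd1 : Disjoint (insert α A') B := by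
    rw [Finset.disjoint_insert_left]; exact ⟨hαB, hd⟩
  have hd2 : Disjoint (insert β A') B := by
    rw [Finset.disjoint_insert_left]; exact ⟨hβB, hd⟩
  have hd3 : Disjoint (insert α (insert β A')) B := by
    rw [Finset.disjoint_insert_left]; exact ⟨hαB, hd2⟩
  have hu1 := hV _ _ hd1
  have hu2 := hV _ _ hd2
  have hu3 := hV _ _ hd3
  unfold Vcorr at hu1 hu2 hu3
  rw [Finset.insert_union] at hu1 hu2 hu3
  rw [Finset.insert_union] at hu3
  linarith

end GateAux

/-- **Gate step (Cases 1–4) of the inductive proof of Lemma 1.** If a probability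
distribution `μ` on `{0,1}^n` satisfies `V_{A,B}(μ) ≥ 0` for all pairs of
disjoint site subsets `A, B`, then so does the distribution `ν` obtained by one
gate update `G_{α,β}` with `α ≠ β`. -/
theorem Vcorr_nonneg_gateUpdate
    (μ : (Fin n → Bool) → ℝ) (hμ0 : ∀ x, 0 ≤ μ x) (hμ1 : ∑ x : Fin n → Bool, μ x = 1)
    (hV : ∀ A B : Finset (Fin n), Disjoint A B → 0 ≤ Vcorr μ A B)
    (α β : Fin n) (hαβ : α ≠ β) :
    ∀ A B : Finset (Fin n), Disjoint A B → 0 ≤ Vcorr (gateUpdate α β μ) A B := by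
  intro A B hAB
  by_cases hA : α ∈ A ∨ β ∈ A
  · by_cases hB : α ∈ B ∨ β ∈ B
    · -- both sets meet {α, β}
      have hU : α ∈ A ∪ B ∨ β ∈ A ∪ B := by
        rcases hA with h | h
        · exact Or.inl (Finset.mem_union_left _ h)
        · exact Or.inr (Finset.mem_union_left _ h)
      unfold Vcorr
      rw [GateAux.probZero_gate_mem α β hαβ μ (A ∪ B) hU,
          GateAux.probZero_gate_mem α β hαβ μ A hA,
          GateAux.probZero_gate_mem α β hαβ μ B hB]
      have hsd : (A ∪ B) \ {α, β} = (A \ {α, β}) ∪ (B \ {α, β}) := by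
        rw [Finset.union_sdiff_distrib]
      rw [hsd]
      set A' := A \ {α, β} with hA'def
      set B' := B \ {α, β} with hB'def
      have hαB' : α ∉ B' := by rw [hB'def]; simp
      have hβB' : β ∉ B' := by rw [hB'def]; simp
      have hd : Disjoint A' B' :=
        (hAB.mono_left Finset.sdiff_subset).mono_right Finset.sdiff_subset
      have hd1 : Disjoint (insert α A') B' := by
        rw [Finset.disjoint_insert_left]; exact ⟨hαB', hd⟩
      have hd2 : Disjoint (insert β A') B' := by
        rw [Finset.disjoint_insert_left]; exact ⟨hβB', hd⟩
      have hd3 : Disjoint (insert α (insert β A')) B' := by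
        rw [Finset.disjoint_insert_left]; exact ⟨hαB', hd2⟩
      have hu1 := hV _ _ hd1
      have hu2 := hV _ _ hd2
      have hu3 := hV _ _ hd3
      unfold Vcorr at hu1 hu2 hu3
      rw [Finset.insert_union] at hu1 hu2 hu3
      rw [Finset.insert_union] at hu3
      have hb1 : probZero μ (insert α B') ≤ probZero μ B' :=
        GateAux.probZero_mono μ hμ0 (Finset.subset_insert _ _)
      have hb2 : probZero μ (insert β B') ≤ probZero μ B' :=
        GateAux.probZero_mono μ hμ0 (Finset.subset_insert _ _)
      have hb3 : probZero μ (insert α (insert β B')) ≤ probZero μ B' :=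
        GateAux.probZero_mono μ hμ0
          ((Finset.subset_insert _ _).trans (Finset.subset_insert _ _))
      have ha1 := GateAux.probZero_nonneg μ hμ0 (insert α A')
      have ha2 := GateAux.probZero_nonneg μ hμ0 (insert β A')
      have ha3 := GateAux.probZero_nonneg μ hμ0 (insert α (insert β A'))
      have hM := GateAux.probZero_nonneg μ hμ0 B'
      nlinarith [mul_nonneg
        (by linarith : (0:ℝ) ≤ probZero μ (insert α A') + probZero μ (insert β A')
            + 3 * probZero μ (insert α (insert β A')))
        (by linarith : (0:ℝ) ≤ 5 * probZero μ B' - (probZero μ (insert α B')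
            + probZero μ (insert β B') + 3 * probZero μ (insert α (insert β B'))))]
    · push_neg at hB
      exact GateAux.case_one_sided μ hV α β hαβ A B hAB hA hB.1 hB.2
  · push_neg at hA
    by_cases hB : α ∈ B ∨ β ∈ B
    · rw [GateAux.Vcorr_comm]
      exact GateAux.case_one_sided μ hV α β hαβ B A hAB.symm hB hA.1 hA.2
    · push_neg at hB
      unfold Vcorr
      rw [GateAux.probZero_gate_notmem α β hαβ μ (A ∪ B)
            (by simp [hA.1, hB.1]) (by simp [hA.2, hB.2]),
          GateAux.probZero_gate_notmem α β hαβ μ A hA.1 hA.2,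
          GateAux.probZero_gate_notmem α β hαβ μ B hB.1 hB.2]
      exact hV A B hAB
end
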